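/- Let Q be a traceless symmetric real 3×3 matrix with eigenvalues λ₁ ≥ λ₂ ≥ λ₃ and with λ₁ > λ₂, λ₂ > λ₃, and let n, m be unit eigenvectors for λ₁, λ₃ respectively. Then P₀ = r*(n⊗n − m⊗m) is the unique nearest point of N to Q: for all P ∈ N, |Q − P₀| ≤ |Q − P|, with strict inequality when P ≠ P₀. -/
import Mathlib


open Matrix
set_option maxHeartbeats 1000000

/-- The manifold `N = { r*(u⊗u − v⊗v) : u, v ∈ ℝ³ orthonormal }`. -/
def Nman (rs : ℝ) : Set (Matrix (Fin 3) (Fin 3) ℝ) :=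
  {A | ∃ u v : Fin 3 → ℝ, u ⬝ᵥ u = 1 ∧ v ⬝ᵥ v = 1 ∧ u ⬝ᵥ v = 0 ∧
    A = rs • (vecMulVec u u - vecMulVec v v)}

/-- Frobenius norm of a real 3×3 matrix. -/
noncomputable def frobNorm (A : Matrix (Fin 3) (Fin 3) ℝ) : ℝ :=
  Real.sqrt ((Aᵀ * A).trace)

lemma tr_vmv (a b c d : Fin 3 → ℝ) :
    ((vecMulVec a b)ᵀ * vecMulVec c d).trace = (a ⬝ᵥ c) * (b ⬝ᵥ d) := by
  simp [Matrix.trace, Matrix.mul_apply, vecMulVec_apply, dotProduct,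
    Fin.sum_univ_three, Matrix.diag, Matrix.transpose_apply]
  ring

lemma trace_sq_nonneg (A : Matrix (Fin 3) (Fin 3) ℝ) : 0 ≤ (Aᵀ * A).trace := by
  have h : (Aᵀ * A).trace = ∑ i, ∑ j, (A j i)^2 := by
    simp [Matrix.trace, Matrix.mul_apply, Matrix.diag, Matrix.transpose_apply, sq]
  rw [h]
  positivity

lemma dist_sq (rs l1 l2 l3 : ℝ) (n p m u v : Fin 3 → ℝ)
    (hn : n ⬝ᵥ n = 1) (hp : p ⬝ᵥ p = 1) (hm : m ⬝ᵥ m = 1)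
    (hnp : n ⬝ᵥ p = 0) (hnm : n ⬝ᵥ m = 0) (hpm : p ⬝ᵥ m = 0)
    (hu : u ⬝ᵥ u = 1) (hv : v ⬝ᵥ v = 1) (huv : u ⬝ᵥ v = 0) :
    (((l1 • vecMulVec n n + l2 • vecMulVec p p + l3 • vecMulVec m m
        - rs • (vecMulVec u u - vecMulVec v v))ᵀ
      * (l1 • vecMulVec n n + l2 • vecMulVec p p + l3 • vecMulVec m m
        - rs • (vecMulVec u u - vecMulVec v v))).trace)
    = l1^2 + l2^2 + l3^2 + 2*rs^2
      - 2*rs*(l1*((n ⬝ᵥ u)^2 - (n ⬝ᵥ v)^2) + l2*((p ⬝ᵥ u)^2 - (p ⬝ᵥ v)^2)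
        + l3*((m ⬝ᵥ u)^2 - (m ⬝ᵥ v)^2)) := by
  simp only [smul_sub, Matrix.transpose_sub, Matrix.transpose_add, Matrix.transpose_smul,
    Matrix.sub_mul, Matrix.add_mul, Matrix.mul_sub, Matrix.mul_add, Matrix.smul_mul,
    Matrix.mul_smul, Matrix.trace_sub, Matrix.trace_add, Matrix.trace_smul, tr_vmv,
    smul_eq_mul]
  simp only [dotProduct_comm p n, dotProduct_comm m n, dotProduct_comm m p,
    dotProduct_comm u n, dotProduct_comm u p, dotProduct_comm u m,
    dotProduct_comm v n, dotProduct_comm v p, dotProduct_comm v m,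
    dotProduct_comm v u, hn, hp, hm, hnp, hnm, hpm, hu, hv, huv]
  ring

lemma complete3 (n p m : Fin 3 → ℝ)
    (hn : n ⬝ᵥ n = 1) (hp : p ⬝ᵥ p = 1) (hm : m ⬝ᵥ m = 1)
    (hnp : n ⬝ᵥ p = 0) (hnm : n ⬝ᵥ m = 0) (hpm : p ⬝ᵥ m = 0)
    (x : Fin 3 → ℝ) :
    x ⬝ᵥ x = (n ⬝ᵥ x)^2 + (p ⬝ᵥ x)^2 + (m ⬝ᵥ x)^2 := by
  have Hn : n 0*n 0+n 1*n 1+n 2*n 2 = 1 := by simpa [dotProduct, Fin.sum_univ_three] using hn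
  have Hp : p 0*p 0+p 1*p 1+p 2*p 2 = 1 := by simpa [dotProduct, Fin.sum_univ_three] using hp
  have Hm : m 0*m 0+m 1*m 1+m 2*m 2 = 1 := by simpa [dotProduct, Fin.sum_univ_three] using hm
  have Hnp : n 0*p 0+n 1*p 1+n 2*p 2 = 0 := by simpa [dotProduct, Fin.sum_univ_three] using hnp
  have Hnm : n 0*m 0+n 1*m 1+n 2*m 2 = 0 := by simpa [dotProduct, Fin.sum_univ_three] using hnm
  have Hpm : p 0*m 0+p 1*m 1+p 2*m 2 = 0 := by simpa [dotProduct, Fin.sum_univ_three] using hpm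
  set B : Matrix (Fin 3) (Fin 3) ℝ := Matrix.of ![n, p, m] with hB
  have hBBt : B * Bᵀ = 1 := by
    ext i j
    fin_cases i <;> fin_cases j <;>
      simp [hB, Matrix.mul_apply, Fin.sum_univ_three, Matrix.one_apply, Matrix.transpose_apply,
        Matrix.vecHead, Matrix.vecTail] <;>
      linarith [Hn, Hp, Hm, Hnp, Hnm, Hpm]
  have hBtB : Bᵀ * B = 1 := mul_eq_one_comm.mp hBBt
  have key : ∀ i j : Fin 3,
      n i * n j + p i * p j + m i * m j = (1 : Matrix (Fin 3) (Fin 3) ℝ) i j := by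
    intro i j
    have h := congrFun (congrFun hBtB i) j
    rw [← h]
    simp [hB, Matrix.mul_apply, Fin.sum_univ_three, Matrix.transpose_apply, Matrix.vecHead,
      Matrix.vecTail]
    try ring
  have k00 : n 0 * n 0 + p 0 * p 0 + m 0 * m 0 = 1 := by simpa using key 0 0
  have k11 : n 1 * n 1 + p 1 * p 1 + m 1 * m 1 = 1 := by simpa using key 1 1
  have k22 : n 2 * n 2 + p 2 * p 2 + m 2 * m 2 = 1 := by simpa using key 2 2
  have k01 : n 0 * n 1 + p 0 * p 1 + m 0 * m 1 = 0 := by simpa using key 0 1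
  have k02 : n 0 * n 2 + p 0 * p 2 + m 0 * m 2 = 0 := by simpa using key 0 2
  have k12 : n 1 * n 2 + p 1 * p 2 + m 1 * m 2 = 0 := by simpa using key 1 2
  simp only [dotProduct, Fin.sum_univ_three]
  linear_combination -((x 0)^2 * k00 + (x 1)^2 * k11 + (x 2)^2 * k22 +
    2*(x 0)*(x 1)*k01 + 2*(x 0)*(x 2)*k02 + 2*(x 1)*(x 2)*k12)

/-- Let `Q` be traceless symmetric with eigenvalues `λ₁ > λ₂ > λ₃` and
orthonormal eigenvectors `n, p, m` (so `n` for `λ₁`, `m` for `λ₃`). Then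
`P₀ = r*(n⊗n − m⊗m)` is the unique nearest point of `N` to `Q`: for all `P ∈ N`,
`|Q − P₀| ≤ |Q − P|`, with strict inequality if `P ≠ P₀`. -/
theorem stmt_10 (rs : ℝ) (hrs : 0 < rs) (Q : Matrix (Fin 3) (Fin 3) ℝ)
    (l1 l2 l3 : ℝ) (n p m : Fin 3 → ℝ)
    (hn : n ⬝ᵥ n = 1) (hp : p ⬝ᵥ p = 1) (hm : m ⬝ᵥ m = 1)
    (hnp : n ⬝ᵥ p = 0) (hnm : n ⬝ᵥ m = 0) (hpm : p ⬝ᵥ m = 0)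
    (h12 : l2 < l1) (h23 : l3 < l2) (hsum : l1 + l2 + l3 = 0)
    (hdecomp : Q = l1 • vecMulVec n n + l2 • vecMulVec p p + l3 • vecMulVec m m)
    (P0 : Matrix (Fin 3) (Fin 3) ℝ) (hP0 : P0 = rs • (vecMulVec n n - vecMulVec m m)) :
    P0 ∈ Nman rs ∧
    ∀ P ∈ Nman rs, frobNorm (Q - P0) ≤ frobNorm (Q - P) ∧
      (P ≠ P0 → frobNorm (Q - P0) < frobNorm (Q - P)) := by
  have hpn : p ⬝ᵥ n = 0 := by rw [dotProduct_comm]; exact hnp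
  have hmn : m ⬝ᵥ n = 0 := by rw [dotProduct_comm]; exact hnm
  have hmp : m ⬝ᵥ p = 0 := by rw [dotProduct_comm]; exact hpm
  have e0 : ((Q - P0)ᵀ * (Q - P0)).trace
      = l1^2 + l2^2 + l3^2 + 2*rs^2 - 2*rs*(l1 - l3) := by
    rw [hdecomp, hP0]
    rw [dist_sq rs l1 l2 l3 n p m n m hn hp hm hnp hnm hpm hn hm hnm]
    rw [hn, hm, hnm, hpn, hpm, hmn]
    ring
  constructor
  · exact ⟨n, m, hn, hm, hnm, hP0⟩
  intro P hP
  obtain ⟨u, v, hu, hv, huv, hPe⟩ := hP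
  have eP : ((Q - P)ᵀ * (Q - P)).trace
      = l1^2 + l2^2 + l3^2 + 2*rs^2
        - 2*rs*(l1*((n ⬝ᵥ u)^2 - (n ⬝ᵥ v)^2) + l2*((p ⬝ᵥ u)^2 - (p ⬝ᵥ v)^2)
          + l3*((m ⬝ᵥ u)^2 - (m ⬝ᵥ v)^2)) := by
    rw [hdecomp, hPe]
    exact dist_sq rs l1 l2 l3 n p m u v hn hp hm hnp hnm hpm hu hv huv
  have cu : (n ⬝ᵥ u)^2 + (p ⬝ᵥ u)^2 + (m ⬝ᵥ u)^2 = 1 :=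
    (complete3 n p m hn hp hm hnp hnm hpm u).symm.trans hu
  have cv : (n ⬝ᵥ v)^2 + (p ⬝ᵥ v)^2 + (m ⬝ᵥ v)^2 = 1 :=
    (complete3 n p m hn hp hm hnp hnm hpm v).symm.trans hv
  have t1 : 0 ≤ (l1 - l2) * (p ⬝ᵥ u)^2 :=
    mul_nonneg (sub_nonneg.2 h12.le) (sq_nonneg _)
  have t2 : 0 ≤ (l1 - l3) * (m ⬝ᵥ u)^2 :=
    mul_nonneg (sub_nonneg.2 (h23.trans h12).le) (sq_nonneg _)
  have t3 : 0 ≤ (l1 - l3) * (n ⬝ᵥ v)^2 :=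
    mul_nonneg (sub_nonneg.2 (h23.trans h12).le) (sq_nonneg _)
  have t4 : 0 ≤ (l2 - l3) * (p ⬝ᵥ v)^2 :=
    mul_nonneg (sub_nonneg.2 h23.le) (sq_nonneg _)
  have hid : l1 - l3
      - (l1*((n ⬝ᵥ u)^2 - (n ⬝ᵥ v)^2) + l2*((p ⬝ᵥ u)^2 - (p ⬝ᵥ v)^2)
        + l3*((m ⬝ᵥ u)^2 - (m ⬝ᵥ v)^2))
      = (l1 - l2) * (p ⬝ᵥ u)^2 + (l1 - l3) * (m ⬝ᵥ u)^2
        + (l1 - l3) * (n ⬝ᵥ v)^2 + (l2 - l3) * (p ⬝ᵥ v)^2 := by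
    linear_combination -l1 * cu + l3 * cv
  have hkey : l1*((n ⬝ᵥ u)^2 - (n ⬝ᵥ v)^2) + l2*((p ⬝ᵥ u)^2 - (p ⬝ᵥ v)^2)
      + l3*((m ⬝ᵥ u)^2 - (m ⬝ᵥ v)^2) ≤ l1 - l3 := by linarith
  have hge : ((Q - P0)ᵀ * (Q - P0)).trace ≤ ((Q - P)ᵀ * (Q - P)).trace := by
    rw [e0, eP]
    nlinarith [mul_le_mul_of_nonneg_left hkey (by positivity : (0:ℝ) ≤ 2*rs)]
  refine ⟨Real.sqrt_le_sqrt hge, ?_⟩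
  intro hne
  have hlt : ((Q - P0)ᵀ * (Q - P0)).trace < ((Q - P)ᵀ * (Q - P)).trace := by
    rcases lt_or_ge (((Q - P0)ᵀ * (Q - P0)).trace) (((Q - P)ᵀ * (Q - P)).trace) with h | h
    · exact h
    exfalso
    apply hne
    have h' : l1 - l3 ≤ l1*((n ⬝ᵥ u)^2 - (n ⬝ᵥ v)^2) + l2*((p ⬝ᵥ u)^2 - (p ⬝ᵥ v)^2)
        + l3*((m ⬝ᵥ u)^2 - (m ⬝ᵥ v)^2) := by
      rw [e0, eP] at h
      have h2 : (2*rs) * (l1 - l3)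
          ≤ (2*rs) * (l1*((n ⬝ᵥ u)^2 - (n ⬝ᵥ v)^2) + l2*((p ⬝ᵥ u)^2 - (p ⬝ᵥ v)^2)
            + l3*((m ⬝ᵥ u)^2 - (m ⬝ᵥ v)^2)) := by linarith [h]
      exact le_of_mul_le_mul_left h2 (by positivity)
    have ha2 : p ⬝ᵥ u = 0 := by
      have h2 : (p ⬝ᵥ u)^2 ≤ 0 := by nlinarith [sub_pos.2 h12]
      exact sq_eq_zero_iff.mp (le_antisymm h2 (sq_nonneg _))
    have ha3 : m ⬝ᵥ u = 0 := by
      have h2 : (m ⬝ᵥ u)^2 ≤ 0 := by nlinarith [sub_pos.2 (h23.trans h12)]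
      exact sq_eq_zero_iff.mp (le_antisymm h2 (sq_nonneg _))
    have hb1 : n ⬝ᵥ v = 0 := by
      have h2 : (n ⬝ᵥ v)^2 ≤ 0 := by nlinarith [sub_pos.2 (h23.trans h12)]
      exact sq_eq_zero_iff.mp (le_antisymm h2 (sq_nonneg _))
    have hb2 : p ⬝ᵥ v = 0 := by
      have h2 : (p ⬝ᵥ v)^2 ≤ 0 := by nlinarith [sub_pos.2 h23]
      exact sq_eq_zero_iff.mp (le_antisymm h2 (sq_nonneg _))
    have hxu : u = (n ⬝ᵥ u) • n := by
      have h0 : (u - (n ⬝ᵥ u) • n) ⬝ᵥ (u - (n ⬝ᵥ u) • n) = 0 := by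
        rw [complete3 n p m hn hp hm hnp hnm hpm]
        simp [dotProduct_sub, dotProduct_smul, hn, hpn, hmn, ha2, ha3, smul_eq_mul]
      have := dotProduct_self_eq_zero.mp h0
      exact sub_eq_zero.mp this
    have hxv : v = (m ⬝ᵥ v) • m := by
      have h0 : (v - (m ⬝ᵥ v) • m) ⬝ᵥ (v - (m ⬝ᵥ v) • m) = 0 := by
        rw [complete3 n p m hn hp hm hnp hnm hpm]
        simp [dotProduct_sub, dotProduct_smul, hm, hnm, hpm, hb1, hb2, smul_eq_mul]
      have := dotProduct_self_eq_zero.mp h0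
      exact sub_eq_zero.mp this
    have ha1 : (n ⬝ᵥ u)^2 = 1 := by rw [← cu, ha2, ha3]; ring
    have hb3 : (m ⬝ᵥ v)^2 = 1 := by rw [← cv, hb1, hb2]; ring
    have huu : vecMulVec u u = vecMulVec n n := by
      ext i j
      rw [hxu]
      simp only [vecMulVec_apply, Pi.smul_apply, smul_eq_mul]
      linear_combination (n i * n j) * ha1
    have hvv : vecMulVec v v = vecMulVec m m := by
      ext i j
      rw [hxv]
      simp only [vecMulVec_apply, Pi.smul_apply, smul_eq_mul]
      linear_combination (m i * m j) * hb3
    rw [hPe, hP0, huu, hvv]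
  exact Real.sqrt_lt_sqrt (trace_sq_nonneg _) hlt
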